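/- The set E = {0} ∪ ⋃_{n=2}^∞ [n^{−n−1/2}, n^{−n}] ⊆ ℝ is weakly dense, but E is not strongly one-sided dense at the point 0 (hence E is weakly dense but not strongly one-sided dense). -/

import Mathlib

open MeasureTheory Set Filter Topology

/-- The set `{0} ∪ ⋃_{n ≥ 2} [n^{-n-1/2}, n^{-n}]`. -/
noncomputable def Eset : Set ℝ :=
  {0} ∪ ⋃ n : ℕ, ⋃ (_ : 2 ≤ n), Set.Icc ((n : ℝ) ^ (-(n : ℝ) - 1/2)) ((n : ℝ) ^ (-(n : ℝ)))

/-- `E` is weakly dense at `x`: there are non-degenerate closed intervals shrinking to `x`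
on which the density of `E` tends to `1`. -/
def WeaklyDenseAt (E : Set ℝ) (x : ℝ) : Prop :=
  ∃ a b : ℕ → ℝ, (∀ n, a n < b n) ∧ (∀ n, x ∈ Set.Icc (a n) (b n)) ∧
    Tendsto (fun n => b n - a n) atTop (𝓝 0) ∧
    Tendsto (fun n => (volume (E ∩ Set.Icc (a n) (b n))).toReal / (b n - a n)) atTop (𝓝 1)

/-- `E` is strongly one-sided dense at `x`. -/
def StronglyOneSidedDenseAt (E : Set ℝ) (x : ℝ) : Prop :=
  ∀ r : ℕ → ℝ, (∀ n, 0 < r n) → Tendsto r atTop (𝓝 0) →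
    Tendsto (fun n => max ((volume (E ∩ Set.Icc (x - r n) x)).toReal / r n)
        ((volume (E ∩ Set.Icc x (x + r n))).toReal / r n)) atTop (𝓝 1)

/-! ### Auxiliary definitions and lemmas -/

noncomputable def aa (n : ℕ) : ℝ := (n:ℝ) ^ (-(n:ℝ) - 1/2)
noncomputable def bb (n : ℕ) : ℝ := (n:ℝ) ^ (-(n:ℝ))

lemma Eset_eq : Eset = {0} ∪ ⋃ n : ℕ, ⋃ (_ : 2 ≤ n), Set.Icc (aa n) (bb n) := rfl

lemma one_lt_cast {n : ℕ} (hn : 2 ≤ n) : (1:ℝ) < n := by exact_mod_cast hn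

lemma aa_pos {n : ℕ} (hn : 2 ≤ n) : 0 < aa n :=
  Real.rpow_pos_of_pos (by have := one_lt_cast hn; linarith) _

lemma bb_pos {n : ℕ} (hn : 2 ≤ n) : 0 < bb n :=
  Real.rpow_pos_of_pos (by have := one_lt_cast hn; linarith) _

lemma aa_lt_bb {n : ℕ} (hn : 2 ≤ n) : aa n < bb n :=
  Real.rpow_lt_rpow_left_iff (one_lt_cast hn) |>.2 (by linarith)

lemma aa_div_bb {n : ℕ} (hn : 2 ≤ n) : aa n / bb n = (n:ℝ) ^ (-(1:ℝ)/2) := by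
  have h0 : (0:ℝ) < n := by have := one_lt_cast hn; linarith
  rw [aa, bb, ← Real.rpow_sub h0]
  ring_nf

lemma bb_le_inv {n : ℕ} (hn : 2 ≤ n) : bb n ≤ 1 / n := by
  have h1 := one_lt_cast hn
  have : bb n ≤ (n:ℝ) ^ (-1 : ℝ) :=
    Real.rpow_le_rpow_left_iff h1 |>.2 (by linarith)
  rwa [Real.rpow_neg_one, ← one_div] at this

lemma aa_anti {m k : ℕ} (hm : 2 ≤ m) (hmk : m ≤ k) : aa k ≤ aa m := by
  have h1m := one_lt_cast hm
  have h1k := one_lt_cast (hm.trans hmk)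
  have hc : (m:ℝ) ≤ k := by exact_mod_cast hmk
  have key : (k:ℝ) ^ (-(m:ℝ) - 1/2) ≤ (m:ℝ) ^ (-(m:ℝ) - 1/2) := by
    have e : ∀ x : ℝ, 0 ≤ x → x ^ (-(m:ℝ) - 1/2) = (x ^ ((m:ℝ) + 1/2))⁻¹ := by
      intro x hx
      rw [show -(m:ℝ) - 1/2 = -((m:ℝ)+1/2) by ring, Real.rpow_neg hx]
    rw [e _ (by linarith), e _ (by linarith)]
    exact inv_anti₀ (Real.rpow_pos_of_pos (by linarith) _)
      (Real.rpow_le_rpow (by linarith) hc (by positivity))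
  calc aa k = (k:ℝ) ^ (-(k:ℝ) - 1/2) := rfl
    _ ≤ (k:ℝ) ^ (-(m:ℝ) - 1/2) :=
        (Real.rpow_le_rpow_left_iff h1k).2 (by linarith)
    _ ≤ (m:ℝ) ^ (-(m:ℝ) - 1/2) := key
    _ = aa m := rfl

lemma bb_le_geom {k m : ℕ} (hk : 2 ≤ k) (hkm : k ≤ m) : bb m ≤ (1/(k:ℝ))^m := by
  have h0k : (0:ℝ) < k := by have := one_lt_cast hk; linarith
  have h0m : (0:ℝ) < m := by have := one_lt_cast (hk.trans hkm); linarith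
  have hc : (k:ℝ) ≤ m := by exact_mod_cast hkm
  have h1 : (k:ℝ)^m ≤ (m:ℝ)^m := pow_le_pow_left₀ h0k.le hc m
  have hbb : bb m = ((m:ℝ)^m)⁻¹ := by
    rw [bb, ← Real.rpow_natCast (m:ℝ) m, ← Real.rpow_neg h0m.le]
  rw [hbb, one_div, inv_pow]
  exact inv_anti₀ (by positivity) h1

lemma Icc_subset_Eset {n : ℕ} (hn : 2 ≤ n) : Set.Icc (aa n) (bb n) ⊆ Eset := by
  rw [Eset_eq]
  exact fun x hx => Or.inr (mem_iUnion.2 ⟨n, mem_iUnion.2 ⟨hn, hx⟩⟩)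

lemma mem_Eset_cases {x : ℝ} (hx : x ∈ Eset) :
    x = 0 ∨ ∃ m, 2 ≤ m ∧ x ∈ Set.Icc (aa m) (bb m) := by
  rw [Eset_eq] at hx
  rcases hx with h | h
  · exact Or.inl h
  · simp only [mem_iUnion] at h
    obtain ⟨m, hm, hx⟩ := h
    exact Or.inr ⟨m, hm, hx⟩

lemma subset_key {k : ℕ} (hk : 2 ≤ k) :
    Eset ∩ Set.Icc 0 (aa k) ⊆ ({0} ∪ {aa k}) ∪ ⋃ i : ℕ, Set.Icc (aa (k+1+i)) (bb (k+1+i)) := by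
  rintro x ⟨hE, hx0, hxk⟩
  rcases mem_Eset_cases hE with h0 | ⟨m, hm2, hma, hmb⟩
  · exact Or.inl (Or.inl h0)
  · rcases le_or_gt m k with hmk | hkm
    · have : aa k ≤ x := (aa_anti hm2 hmk).trans hma
      exact Or.inl (Or.inr (le_antisymm hxk this))
    · refine Or.inr (mem_iUnion.2 ⟨m - (k+1), ?_⟩)
      have : k + 1 + (m - (k+1)) = m := by omega
      rw [this]; exact ⟨hma, hmb⟩

lemma key_measure {k : ℕ} (hk : 2 ≤ k) :
    volume (Eset ∩ Set.Icc 0 (aa k)) ≤ ENNReal.ofReal (2 * (1/(k:ℝ))^(k+1)) := by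
  have h0k : (0:ℝ) < k := by have := one_lt_cast hk; linarith
  set c : ENNReal := ENNReal.ofReal (1/(k:ℝ)) with hc
  have hch : c ≤ 1/2 := by
    rw [show (1/2 : ENNReal) = ENNReal.ofReal (1/2) by
      rw [ENNReal.ofReal_div_of_pos] <;> norm_num]
    apply ENNReal.ofReal_le_ofReal
    rw [one_div, one_div]
    exact inv_anti₀ (by norm_num) (by exact_mod_cast hk)
  have hz : volume (({(0:ℝ)} ∪ {aa k}) : Set ℝ) = 0 :=
    measure_union_null (measure_singleton _) (measure_singleton _)
  calc volume (Eset ∩ Set.Icc 0 (aa k))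
      ≤ volume (({0} ∪ {aa k}) ∪ ⋃ i : ℕ, Set.Icc (aa (k+1+i)) (bb (k+1+i))) :=
        measure_mono (subset_key hk)
    _ ≤ volume (({(0:ℝ)} ∪ {aa k}) : Set ℝ)
          + volume (⋃ i : ℕ, Set.Icc (aa (k+1+i)) (bb (k+1+i))) :=
        measure_union_le _ _
    _ = volume (⋃ i : ℕ, Set.Icc (aa (k+1+i)) (bb (k+1+i))) := by rw [hz, zero_add]
    _ ≤ ∑' i : ℕ, volume (Set.Icc (aa (k+1+i)) (bb (k+1+i))) := measure_iUnion_le _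
    _ ≤ ∑' i : ℕ, c ^ (k+1+i) := by
        apply ENNReal.tsum_le_tsum
        intro i
        rw [Real.volume_Icc, hc, ← ENNReal.ofReal_pow (by positivity)]
        apply ENNReal.ofReal_le_ofReal
        have h1 : bb (k+1+i) ≤ (1/(k:ℝ))^(k+1+i) := bb_le_geom hk (by omega)
        have h2 : 0 < aa (k+1+i) := aa_pos (by omega)
        linarith
    _ = c ^ (k+1) * ∑' i : ℕ, c ^ i := by
        simp_rw [pow_add, ENNReal.tsum_mul_left]
    _ = c ^ (k+1) * (1 - c)⁻¹ := by rw [ENNReal.tsum_geometric]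
    _ ≤ c ^ (k+1) * 2 := by
        gcongr
        have h12 : (1/2 : ENNReal) ≤ 1 - c := by
          calc (1/2 : ENNReal) = 1 - 1/2 := by rw [ENNReal.sub_half]; norm_num
            _ ≤ 1 - c := tsub_le_tsub_left hch 1
        calc (1 - c)⁻¹ ≤ (1/2 : ENNReal)⁻¹ := ENNReal.inv_le_inv.2 h12
          _ = 2 := by simp
    _ = ENNReal.ofReal (2 * (1/(k:ℝ))^(k+1)) := by
        rw [hc, ← ENNReal.ofReal_pow (by positivity), mul_comm,
          ← ENNReal.ofReal_ofNat, ← ENNReal.ofReal_mul (by positivity)]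

lemma geom_div_aa {k : ℕ} (hk : 2 ≤ k) :
    (1/(k:ℝ))^(k+1) / aa k = (k:ℝ) ^ (-(1:ℝ)/2) := by
  have h0k : (0:ℝ) < k := by have := one_lt_cast hk; linarith
  have h1 : (1/(k:ℝ))^(k+1) = (k:ℝ) ^ (-((k:ℝ)+1)) := by
    rw [one_div, inv_pow, ← Real.rpow_natCast (k:ℝ) (k+1), ← Real.rpow_neg h0k.le]
    push_cast
    ring_nf
  rw [h1, aa, ← Real.rpow_sub h0k]
  congr 1
  ring

lemma right_density_bound {k : ℕ} (hk : 2 ≤ k) :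
    (volume (Eset ∩ Set.Icc 0 (aa k))).toReal / aa k ≤ 2 * (k:ℝ) ^ (-(1:ℝ)/2) := by
  have hap := aa_pos hk
  have h0k : (0:ℝ) < k := by have := one_lt_cast hk; linarith
  have h1 : (volume (Eset ∩ Set.Icc 0 (aa k))).toReal ≤ 2 * (1/(k:ℝ))^(k+1) :=
    ENNReal.toReal_le_of_le_ofReal (by positivity) (key_measure hk)
  calc (volume (Eset ∩ Set.Icc 0 (aa k))).toReal / aa k
      ≤ (2 * (1/(k:ℝ))^(k+1)) / aa k := by gcongr
    _ = 2 * ((1/(k:ℝ))^(k+1) / aa k) := by ring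
    _ = 2 * (k:ℝ) ^ (-(1:ℝ)/2) := by rw [geom_div_aa hk]

lemma rpow_half_tendsto :
    Tendsto (fun n : ℕ => ((n+2 : ℕ) : ℝ) ^ (-(1:ℝ)/2)) atTop (𝓝 0) := by
  have h1 : Tendsto (fun x : ℝ => x ^ (-(1/2 : ℝ))) atTop (𝓝 0) :=
    tendsto_rpow_neg_atTop (by norm_num)
  have h2 : Tendsto (fun n : ℕ => ((n+2 : ℕ) : ℝ)) atTop atTop :=
    tendsto_natCast_atTop_atTop.comp (tendsto_add_atTop_nat 2)
  have := h1.comp h2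
  simpa [Function.comp_def, neg_div] using this

lemma left_zero {r : ℝ} (hr : 0 < r) :
    (volume (Eset ∩ Set.Icc (0 - r) 0)).toReal / r = 0 := by
  have hsub : Eset ∩ Set.Icc (0 - r) 0 ⊆ {0} := by
    rintro x ⟨hE, _, hx0⟩
    rcases mem_Eset_cases hE with h | ⟨m, hm, hma, _⟩
    · exact h
    · exact absurd (lt_of_lt_of_le (aa_pos hm) hma) (not_lt.2 hx0)
  have : volume (Eset ∩ Set.Icc (0 - r) 0) = 0 :=
    measure_mono_null hsub (measure_singleton _)
  rw [this]
  simp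

/-! ### Weak density at 0 -/

lemma wd_at_zero : WeaklyDenseAt Eset 0 := by
  refine ⟨fun _ => 0, fun n => bb (n+2), fun n => bb_pos (by omega), ?_, ?_, ?_⟩
  · exact fun n => ⟨le_refl 0, (bb_pos (by omega)).le⟩
  · apply squeeze_zero (fun n => by simpa using (bb_pos (n := n+2) (by omega)).le)
      (fun n => ?_) tendsto_one_div_add_atTop_nhds_zero_nat
    · calc bb (n+2) - 0 = bb (n+2) := by ring
        _ ≤ 1 / ((n:ℝ)+2) := by
            have := bb_le_inv (n := n+2) (by omega); push_cast at this ⊢; linarith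
        _ ≤ 1 / ((n:ℝ)+1) := by
            apply div_le_div_of_nonneg_left <;> norm_num <;> linarith [Nat.cast_nonneg (α := ℝ) n]
  · have hup : ∀ n : ℕ, (volume (Eset ∩ Set.Icc 0 (bb (n+2)))).toReal / (bb (n+2) - 0) ≤ 1 := by
      intro n
      have hb := bb_pos (n := n+2) (by omega)
      rw [sub_zero, div_le_one hb]
      apply ENNReal.toReal_le_of_le_ofReal hb.le
      calc volume (Eset ∩ Set.Icc 0 (bb (n+2))) ≤ volume (Set.Icc 0 (bb (n+2))) :=
            measure_mono inter_subset_right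
        _ = ENNReal.ofReal (bb (n+2)) := by rw [Real.volume_Icc, sub_zero]
    have hlo : ∀ n : ℕ, 1 - ((n+2 : ℕ) : ℝ) ^ (-(1:ℝ)/2)
        ≤ (volume (Eset ∩ Set.Icc 0 (bb (n+2)))).toReal / (bb (n+2) - 0) := by
      intro n
      have h2 : (2:ℕ) ≤ n+2 := by omega
      have ha := aa_pos h2
      have hb := bb_pos h2
      have hab := aa_lt_bb h2
      have hmem : Set.Icc (aa (n+2)) (bb (n+2)) ⊆ Eset ∩ Set.Icc 0 (bb (n+2)) := by
        intro x hx
        exact ⟨Icc_subset_Eset h2 hx, le_trans ha.le hx.1, hx.2⟩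
      have hle : volume (Eset ∩ Set.Icc 0 (bb (n+2))) ≤ volume (Set.Icc (0:ℝ) (bb (n+2))) :=
        measure_mono inter_subset_right
      have hfin : volume (Eset ∩ Set.Icc 0 (bb (n+2))) ≠ ⊤ :=
        (lt_of_le_of_lt hle (by rw [Real.volume_Icc]; exact ENNReal.ofReal_lt_top)).ne
      have hvol : bb (n+2) - aa (n+2) ≤ (volume (Eset ∩ Set.Icc 0 (bb (n+2)))).toReal := by
        have this2 : volume (Set.Icc (aa (n+2)) (bb (n+2))) ≤ volume (Eset ∩ Set.Icc 0 (bb (n+2))) :=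
          measure_mono hmem
        rw [Real.volume_Icc] at this2
        calc bb (n+2) - aa (n+2) = (ENNReal.ofReal (bb (n+2) - aa (n+2))).toReal := by
              rw [ENNReal.toReal_ofReal (by linarith)]
          _ ≤ _ := ENNReal.toReal_mono hfin this2
      rw [sub_zero, le_div_iff₀ hb]
      calc (1 - ((n+2 : ℕ) : ℝ) ^ (-(1:ℝ)/2)) * bb (n+2)
          = bb (n+2) - (aa (n+2) / bb (n+2)) * bb (n+2) := by rw [aa_div_bb h2]; ring
        _ = bb (n+2) - aa (n+2) := by rw [div_mul_cancel₀ _ hb.ne']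
        _ ≤ _ := hvol
    apply tendsto_of_tendsto_of_tendsto_of_le_of_le (g := fun n => 1 - ((n+2:ℕ):ℝ) ^ (-(1:ℝ)/2))
      (h := fun _ => (1:ℝ)) ?_ tendsto_const_nhds hlo hup
    have := rpow_half_tendsto
    have h1 : Tendsto (fun n : ℕ => 1 - ((n+2:ℕ):ℝ) ^ (-(1:ℝ)/2)) atTop (𝓝 (1 - 0)) :=
      tendsto_const_nhds.sub this
    simpa using h1

/-! ### Weak density at interval points -/

lemma wd_at_interval {x : ℝ} {m : ℕ} (hm : 2 ≤ m) (hx : x ∈ Set.Icc (aa m) (bb m)) :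
    WeaklyDenseAt Eset x := by
  set d := bb m - aa m with hd
  have hd0 : 0 < d := sub_pos.2 (aa_lt_bb hm)
  set A : ℕ → ℝ := fun n => max (aa m) (x - d/(n+1)) with hA
  set B : ℕ → ℝ := fun n => min (bb m) (x + d/(n+1)) with hB
  have hδ : ∀ n : ℕ, 0 < d/((n:ℝ)+1) := fun n => by positivity
  have hAB : ∀ n, A n < B n := by
    intro n
    apply max_lt_iff.2
    constructor
    · apply lt_min (aa_lt_bb hm) (lt_of_le_of_lt hx.1 (by linarith [hδ n]))
    · apply lt_min (lt_of_lt_of_le (by linarith [hδ n]) hx.2) (by linarith [hδ n])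
  have hmem : ∀ n, x ∈ Set.Icc (A n) (B n) := by
    intro n
    exact ⟨max_le hx.1 (by linarith [hδ n]), le_min hx.2 (by linarith [hδ n])⟩
  have hsub : ∀ n, Set.Icc (A n) (B n) ⊆ Set.Icc (aa m) (bb m) :=
    fun n => Set.Icc_subset_Icc (le_max_left _ _) (min_le_left _ _)
  refine ⟨A, B, hAB, hmem, ?_, ?_⟩
  · have hub : ∀ n : ℕ, B n - A n ≤ 2 * d * (1/((n:ℝ)+1)) := by
      intro n
      have h1 : x - d/((n:ℝ)+1) ≤ A n := le_max_right _ _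
      have h2 : B n ≤ x + d/((n:ℝ)+1) := min_le_right _ _
      have h3 : B n - A n ≤ 2 * (d/((n:ℝ)+1)) := by linarith
      calc B n - A n ≤ 2 * (d/((n:ℝ)+1)) := h3
        _ = 2 * d * (1/((n:ℝ)+1)) := by ring
    have htd : Tendsto (fun n : ℕ => 2 * d * (1/((n:ℝ)+1))) atTop (𝓝 0) := by
      have := tendsto_one_div_add_atTop_nhds_zero_nat.const_mul (2*d)
      simpa using this
    exact squeeze_zero (fun n => by linarith [hAB n]) hub htd
  · have heq : ∀ n, (volume (Eset ∩ Set.Icc (A n) (B n))).toReal / (B n - A n) = 1 := by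
      intro n
      have hss : Set.Icc (A n) (B n) ⊆ Eset := (hsub n).trans (Icc_subset_Eset hm)
      rw [Set.inter_eq_right.2 hss, Real.volume_Icc,
        ENNReal.toReal_ofReal (by linarith [hAB n])]
      exact div_self (by linarith [hAB n])
    have : (fun n => (volume (Eset ∩ Set.Icc (A n) (B n))).toReal / (B n - A n))
        = fun _ => (1:ℝ) := funext heq
    rw [this]
    exact tendsto_const_nhds

/-! ### Not strongly one-sided dense at 0 -/

lemma not_sosd : ¬ StronglyOneSidedDenseAt Eset 0 := by
  intro h
  have hr : ∀ n : ℕ, 0 < aa (n+2) := fun n => aa_pos (by omega)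
  have hr0 : Tendsto (fun n : ℕ => aa (n+2)) atTop (𝓝 0) := by
    apply squeeze_zero (fun n => (hr n).le) (fun n => ?_)
      tendsto_one_div_add_atTop_nhds_zero_nat
    have h2 : (2:ℕ) ≤ n+2 := by omega
    calc aa (n+2) ≤ bb (n+2) := (aa_lt_bb h2).le
      _ ≤ 1 / ((n:ℝ)+2) := by
          have := bb_le_inv h2; push_cast at this ⊢; linarith
      _ ≤ 1 / ((n:ℝ)+1) := by
          apply div_le_div_of_nonneg_left <;> norm_num <;> linarith [Nat.cast_nonneg (α := ℝ) n]
  have h1 := h (fun n => aa (n+2)) hr hr0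
  set f : ℕ → ℝ := fun n => (volume (Eset ∩ Set.Icc 0 (0 + aa (n+2)))).toReal / aa (n+2) with hf
  have hmax : (fun n => max ((volume (Eset ∩ Set.Icc (0 - aa (n+2)) 0)).toReal / aa (n+2))
      ((volume (Eset ∩ Set.Icc 0 (0 + aa (n+2)))).toReal / aa (n+2))) = f := by
    funext n
    rw [left_zero (hr n)]
    exact max_eq_right (div_nonneg ENNReal.toReal_nonneg (hr n).le)
  rw [hmax] at h1
  have h0 : Tendsto f atTop (𝓝 0) := by
    have hub : ∀ n : ℕ, f n ≤ 2 * ((n+2:ℕ):ℝ) ^ (-(1:ℝ)/2) := by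
      intro n
      have := right_density_bound (k := n+2) (by omega)
      rw [hf]
      simpa using this
    have htd : Tendsto (fun n : ℕ => 2 * ((n+2:ℕ):ℝ) ^ (-(1:ℝ)/2)) atTop (𝓝 0) := by
      have := rpow_half_tendsto.const_mul (2:ℝ)
      simpa [mul_comm] using this
    exact squeeze_zero (fun n => div_nonneg ENNReal.toReal_nonneg (hr n).le) hub htd
  exact one_ne_zero (tendsto_nhds_unique h1 h0)

/-- The set `{0} ∪ ⋃_{n ≥ 2} [n^{-n-1/2}, n^{-n}]` is weakly dense, but not strongly
one-sided dense at `0`. -/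
theorem Eset_WD_not_SOSD :
    (∀ x ∈ Eset, WeaklyDenseAt Eset x) ∧ ¬ StronglyOneSidedDenseAt Eset 0 := by
  constructor
  · intro x hx
    rcases mem_Eset_cases hx with h | ⟨m, hm, hmem⟩
    · rw [h]; exact wd_at_zero
    · exact wd_at_interval hm hmem
  · exact not_sosd
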